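/- With p_∞(i,j) = 1 − e^{−λ_{ij}}, the iterated limit lim_{i→∞} lim_{j→∞} p_∞(i,j)/(λ² h(i,j)) = 1 holds: for each fixed i the inner limit over j exists, and the resulting values converge to 1 as i → ∞. -/

import Mathlib

open MeasureTheory Real Filter
open scoped ENNReal NNReal

noncomputable section

/-- `α = 1/(τ−1)`. -/
def alphaOf (τ : ℝ) : ℝ := 1 / (τ - 1)

/-- `μ = c_F/(1−α)`. -/
def muOf (τ cF : ℝ) : ℝ := cF / (1 - alphaOf τ)

/-- `A_α = ∫_0^∞ (1 − e^{−z}) z^{−1/α} dz`. -/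
def AalphaOf (τ : ℝ) : ℝ :=
  ∫ z in Set.Ioi (0 : ℝ), (1 - Real.exp (-z)) * z ^ (-(1 / alphaOf τ))

/-- `B_α = c_F^{2/α} A_α/(α μ^{1/α})`. -/
def BalphaOf (τ cF : ℝ) : ℝ :=
  cF ^ (2 / alphaOf τ) * AalphaOf τ / (alphaOf τ * muOf τ cF ^ (1 / alphaOf τ))

/-- `λ_c = √(η/(4B_α))` with `η = 2α−1`. -/
def lambdaC (τ cF : ℝ) : ℝ :=
  Real.sqrt ((2 * alphaOf τ - 1) / (4 * BalphaOf τ cF))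

/-- `h(x,y) = B_α (min x y)^{−(1−α)} (max x y)^{−α}`. -/
def hOf (τ cF : ℝ) (x y : ℝ) : ℝ :=
  BalphaOf τ cF * (min x y) ^ (-(1 - alphaOf τ)) * (max x y) ^ (-alphaOf τ)

/-- `θ_i = c_F i^{−α}/μ`. -/
def thetaOf (τ cF : ℝ) (i : ℕ) : ℝ := cF * (i : ℝ) ^ (-alphaOf τ) / muOf τ cF

/-- `Θ_i(x) = 1 − exp(−c_F θ_i x^{−α})`. -/
def ThetaOf (τ cF : ℝ) (i : ℕ) (x : ℝ) : ℝ :=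
  1 - Real.exp (-(cF * thetaOf τ cF i * x ^ (-alphaOf τ)))

/-- `λ_{ij} = λ² ∫_0^∞ Θ_i(x) Θ_j(x) dx`. -/
def lamIJ (τ cF lam : ℝ) (i j : ℕ) : ℝ :=
  lam ^ 2 * ∫ x in Set.Ioi (0 : ℝ), ThetaOf τ cF i x * ThetaOf τ cF j x

open Set Topology

/-!
As `j → ∞` the rate `λ_{ij}` tends to `0`, so `1 - e^{-λ_{ij}} ~ λ_{ij}`. Writing
`Θ_k(x) = 1 - exp(-c k^{-α} x^{-α})`, the factor `Θ_j(x)` is `c j^{-α} x^{-α}` to first order,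
and dominated convergence (with dominating function `Θ_i(x) x^{-α}`, integrable exactly because
`1/2 < α < 1`) gives `λ_{ij} ~ λ² c j^{-α} ∫ Θ_i(x) x^{-α} dx`. The substitution
`z = c i^{-α} x^{-α}` turns this integral into a multiple of `A_α`, and the constants combine to
`λ² h(i, j)`. Hence the inner limit is `1` for every `i`, and so is the outer one.
-/

lemma one_sub_exp_neg_nonneg {t : ℝ} (ht : 0 ≤ t) : 0 ≤ 1 - exp (-t) := by
  linarith [exp_le_one_iff.mpr (neg_nonpos.mpr ht)]

lemma one_sub_exp_neg_le_self (t : ℝ) : 1 - exp (-t) ≤ t := by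
  linarith [one_sub_le_exp_neg t]

lemma one_sub_exp_neg_le_one (t : ℝ) : 1 - exp (-t) ≤ 1 := by
  linarith [exp_nonneg (-t)]

lemma hasDerivAt_one_sub_exp_neg_mul (m : ℝ) :
    HasDerivAt (fun t : ℝ => 1 - exp (-(t * m))) m 0 := by
  simpa using ((hasDerivAt_mul_const (x := (0 : ℝ)) m).neg.exp).const_sub 1

lemma tendsto_one_sub_exp_neg_div_self :
    Tendsto (fun t : ℝ => (1 - exp (-t)) / t) (𝓝[≠] 0) (𝓝 1) := by
  simpa [div_eq_inv_mul] using (hasDerivAt_one_sub_exp_neg_mul 1).tendsto_slope_zero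

lemma Filter.Tendsto.one_sub_exp_neg_div {ι : Type*} {l : Filter ι} {u w : ι → ℝ}
    (hw : Tendsto w l (𝓝 0)) (huw : Tendsto (fun x => u x / w x) l (𝓝 1)) :
    Tendsto (fun x => (1 - Real.exp (-u x)) / w x) l (𝓝 1) := by
  -- `u / w → 1` forces `u ≠ 0` and `w ≠ 0` eventually, since `0 / w = u / 0 = 0`.
  have hu₀ : ∀ᶠ x in l, u x ≠ 0 ∧ w x ≠ 0 :=
    (huw.eventually_ne one_ne_zero).mono fun x hx => ⟨fun h => hx (by simp [h]),
      fun h => hx (by simp [h])⟩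
  have hu : Tendsto u l (𝓝 0) := by
    simpa using (huw.mul hw).congr' (hu₀.mono fun x hx => div_mul_cancel₀ _ hx.2)
  have := (tendsto_one_sub_exp_neg_div_self.comp
    (tendsto_nhdsWithin_iff.mpr ⟨hu, hu₀.mono fun _ hx => hx.1⟩)).mul huw
  rw [one_mul] at this
  refine this.congr' (hu₀.mono fun x hx => ?_)
  simp only [Function.comp_apply]
  field_simp [hx.1]

lemma integrableOn_Ioi_of_le_rpow {f : ℝ → ℝ} {p q C D : ℝ}
    (hf : AEStronglyMeasurable f (volume.restrict (Ioi 0))) (hp : -1 < p) (hq : q < -1)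
    (h₀ : ∀ x ∈ Ioo 0 1, ‖f x‖ ≤ C * x ^ p) (h₁ : ∀ x ∈ Ioi 1, ‖f x‖ ≤ D * x ^ q) :
    IntegrableOn f (Ioi 0) := by
  rw [← Ioo_union_Ici_eq_Ioi zero_lt_one]
  refine IntegrableOn.union ?_ ?_
  · refine Integrable.mono'
      (((intervalIntegral.integrableOn_Ioo_rpow_iff zero_lt_one).mpr hp).const_mul C)
      (hf.mono_measure (Measure.restrict_mono Ioo_subset_Ioi_self le_rfl)) ?_
    exact (ae_restrict_mem measurableSet_Ioo).mono h₀
  · rw [integrableOn_Ici_iff_integrableOn_Ioi]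
    refine Integrable.mono' ((integrableOn_Ioi_rpow_of_lt hq zero_lt_one).const_mul D)
      (hf.mono_measure (Measure.restrict_mono (Ioi_subset_Ioi zero_le_one) le_rfl)) ?_
    exact (ae_restrict_mem measurableSet_Ioi).mono h₁

lemma integrableOn_one_sub_exp_neg_mul_rpow {s : ℝ} (hs₁ : 1 < s) (hs₂ : s < 2) :
    IntegrableOn (fun z : ℝ => (1 - exp (-z)) * z ^ (-s)) (Ioi 0) := by
  refine integrableOn_Ioi_of_le_rpow (C := 1) (D := 1) (p := 1 - s) (q := -s)
    (by fun_prop) (by linarith) (by linarith) (fun z hz => ?_) (fun z hz => ?_)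
  · have hz : 0 < z := hz.1
    rw [Real.norm_of_nonneg (mul_nonneg (one_sub_exp_neg_nonneg hz.le) (by positivity)), one_mul,
      rpow_sub hz, rpow_one, rpow_neg hz.le, div_eq_mul_inv]
    exact mul_le_mul_of_nonneg_right (one_sub_exp_neg_le_self z) (by positivity)
  · have hz : 0 < z := zero_lt_one.trans hz
    rw [Real.norm_of_nonneg (mul_nonneg (one_sub_exp_neg_nonneg hz.le) (by positivity))]
    exact mul_le_mul_of_nonneg_right (one_sub_exp_neg_le_one z) (by positivity)

lemma integral_one_sub_exp_neg_mul_rpow_pos {s : ℝ} (hs₁ : 1 < s) (hs₂ : s < 2) :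
    0 < ∫ z in Ioi (0 : ℝ), (1 - exp (-z)) * z ^ (-s) := by
  have hpos : ∀ z ∈ Ioi (0 : ℝ), 0 < (1 - exp (-z)) * z ^ (-s) := fun z (hz : 0 < z) =>
    mul_pos (by linarith [exp_lt_one_iff.mpr (neg_lt_zero.mpr hz)]) (rpow_pos_of_pos hz _)
  rw [setIntegral_pos_iff_support_of_nonneg_ae
      ((ae_restrict_mem measurableSet_Ioi).mono fun z hz => (hpos z hz).le)
      (integrableOn_one_sub_exp_neg_mul_rpow hs₁ hs₂),
    inter_eq_right.mpr fun z hz => Function.mem_support.mpr (hpos z hz).ne', volume_Ioi]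
  exact ENNReal.zero_lt_top

lemma integrableOn_one_sub_exp_neg_mul_rpow_mul_rpow {α a : ℝ} (hα₁ : 1 / 2 < α) (hα₂ : α < 1)
    (ha : 0 ≤ a) :
    IntegrableOn (fun x : ℝ => (1 - exp (-(a * x ^ (-α)))) * x ^ (-α)) (Ioi 0) := by
  refine integrableOn_Ioi_of_le_rpow (C := 1) (D := a) (p := -α) (q := -α + -α)
    (by fun_prop) (by linarith) (by linarith) (fun x hx => ?_) (fun x hx => ?_)
  · have hx : 0 < x := hx.1
    have hΘ := one_sub_exp_neg_nonneg (t := a * x ^ (-α)) (by positivity)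
    rw [Real.norm_of_nonneg (by positivity), one_mul]
    exact mul_le_of_le_one_left (by positivity) (one_sub_exp_neg_le_one _)
  · have hx : 0 < x := zero_lt_one.trans hx
    have hΘ := one_sub_exp_neg_nonneg (t := a * x ^ (-α)) (by positivity)
    rw [Real.norm_of_nonneg (by positivity), rpow_add hx, ← mul_assoc]
    exact mul_le_mul_of_nonneg_right (one_sub_exp_neg_le_self _) (by positivity)

lemma integral_one_sub_exp_neg_mul_rpow_mul_rpow {α c : ℝ} (hα : 0 < α) (hc : 0 < c) :
    ∫ x in Ioi (0 : ℝ), (1 - exp (-(c * x ^ (-α)))) * x ^ (-α)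
      = c ^ (1 / α - 1) / α * ∫ z in Ioi (0 : ℝ), (1 - exp (-z)) * z ^ (-(1 / α)) := by
  have hp : -(1 / α) ≠ 0 := by simp [hα.ne']
  calc ∫ x in Ioi (0 : ℝ), (1 - exp (-(c * x ^ (-α)))) * x ^ (-α)
      = ∫ x in Ioi (0 : ℝ), (|-(1 / α)| * x ^ (-(1 / α) - 1)) •
          ((1 - exp (-(c * (x ^ (-(1 / α))) ^ (-α)))) * (x ^ (-(1 / α))) ^ (-α)) :=
        (integral_comp_rpow_Ioi _ hp).symm
    _ = ∫ x in Ioi (0 : ℝ), c ^ (1 / α) / α * ((1 - exp (-(c * x))) * (c * x) ^ (-(1 / α))) := by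
        refine setIntegral_congr_fun measurableSet_Ioi fun x (hx : 0 < x) => ?_
        have hxx : (x ^ (-(1 / α))) ^ (-α) = x := by
          rw [← rpow_mul hx.le, show -(1 / α) * -α = 1 by field_simp, rpow_one]
        rw [hxx, smul_eq_mul, mul_rpow hc.le hx.le, rpow_sub_one hx.ne', rpow_neg hc.le,
          abs_neg, abs_of_pos (by positivity)]
        field_simp
    _ = c ^ (1 / α - 1) / α * ∫ z in Ioi (0 : ℝ), (1 - exp (-z)) * z ^ (-(1 / α)) := by
        rw [integral_const_mul,
          integral_comp_mul_left_Ioi (fun z => (1 - exp (-z)) * z ^ (-(1 / α))) _ hc, mul_zero,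
          smul_eq_mul, rpow_sub_one hc.ne']
        ring

lemma integral_one_sub_exp_neg_mul_rpow_mul_rpow_pos {α a : ℝ} (hα₁ : 1 / 2 < α)
    (hα₂ : α < 1) (ha : 0 < a) :
    0 < ∫ x in Ioi (0 : ℝ), (1 - exp (-(a * x ^ (-α)))) * x ^ (-α) := by
  have hα : 0 < α := by linarith
  have := integral_one_sub_exp_neg_mul_rpow_pos (s := 1 / α)
    (by rw [lt_div_iff₀ hα]; linarith) (by rw [div_lt_iff₀ hα]; linarith)
  rw [integral_one_sub_exp_neg_mul_rpow_mul_rpow hα ha]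
  positivity

lemma tendsto_mul_natCast_rpow_neg_nhdsGT {c α : ℝ} (hc : 0 < c) (hα : 0 < α) :
    Tendsto (fun j : ℕ => c * (j : ℝ) ^ (-α)) atTop (𝓝[>] 0) := by
  refine tendsto_nhdsWithin_iff.mpr ⟨?_, eventually_atTop.mpr ⟨1, fun j hj => ?_⟩⟩
  · simpa using ((tendsto_rpow_neg_atTop hα).comp tendsto_natCast_atTop_atTop).const_mul c
  · exact mul_pos hc (rpow_pos_of_pos (by exact_mod_cast hj) _)

lemma tendsto_integral_mul_one_sub_exp_neg_div {X : Type*} [MeasurableSpace X] {μ : Measure X}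
    {F g : X → ℝ} (hF : AEStronglyMeasurable F μ) (hg : AEStronglyMeasurable g μ)
    (hg₀ : 0 ≤ᵐ[μ] g) (hFg : Integrable (fun x => F x * g x) μ) :
    Tendsto (fun b => (∫ x, F x * (1 - exp (-(b * g x))) ∂μ) / b) (𝓝[>] 0)
      (𝓝 (∫ x, F x * g x ∂μ)) := by
  simp only [← integral_div, mul_div_assoc]
  refine tendsto_integral_filter_of_dominated_convergence (fun x => ‖F x * g x‖) ?_ ?_ hFg.norm ?_
  · exact Eventually.of_forall fun b => hF.mul ((by fun_prop : Continuous fun t : ℝ =>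
      (1 - exp (-(b * t))) / b).comp_aestronglyMeasurable hg)
  · filter_upwards [self_mem_nhdsWithin] with b (hb : 0 < b)
    filter_upwards [hg₀] with x hx
    have h₀ := one_sub_exp_neg_nonneg (mul_nonneg hb.le hx)
    rw [norm_mul, norm_mul, Real.norm_of_nonneg (div_nonneg h₀ hb.le), Real.norm_of_nonneg hx]
    gcongr
    exact div_le_of_le_mul₀ hb.le hx (by linarith [one_sub_exp_neg_le_self (b * g x)])
  · refine Eventually.of_forall fun x => (tendsto_const_nhds.mul ?_)
    simpa [div_eq_inv_mul] using
      (hasDerivAt_one_sub_exp_neg_mul (g x)).tendsto_slope_zero_right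

lemma tendsto_integral_one_sub_exp_neg_mul_rpow_div {α a : ℝ} (hα₁ : 1 / 2 < α) (hα₂ : α < 1)
    (ha : 0 ≤ a) :
    Tendsto (fun b => (∫ x in Ioi (0 : ℝ),
        (1 - exp (-(a * x ^ (-α)))) * (1 - exp (-(b * x ^ (-α))))) / b) (𝓝[>] 0)
      (𝓝 (∫ x in Ioi (0 : ℝ), (1 - exp (-(a * x ^ (-α)))) * x ^ (-α))) :=
  tendsto_integral_mul_one_sub_exp_neg_div (by fun_prop) (by fun_prop)
    ((ae_restrict_mem measurableSet_Ioi).mono fun x (hx : 0 < x) => (rpow_pos_of_pos hx _).le)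
    (integrableOn_one_sub_exp_neg_mul_rpow_mul_rpow hα₁ hα₂ ha)

lemma alphaOf_mem_Ioo {τ : ℝ} (hτ : τ ∈ Ioo (2 : ℝ) 3) : alphaOf τ ∈ Ioo (1 / 2) 1 := by
  obtain ⟨hτ₂, hτ₃⟩ := hτ
  constructor
  · rw [alphaOf, lt_div_iff₀ (by linarith)]; linarith
  · rw [alphaOf, div_lt_one (by linarith)]; linarith

lemma muOf_pos {τ cF : ℝ} (hτ : τ ∈ Ioo (2 : ℝ) 3) (hcF : 0 < cF) : 0 < muOf τ cF :=
  div_pos hcF (sub_pos.mpr (alphaOf_mem_Ioo hτ).2)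

def cOf (τ cF : ℝ) : ℝ := cF ^ 2 / muOf τ cF

lemma cOf_pos {τ cF : ℝ} (hτ : τ ∈ Ioo (2 : ℝ) 3) (hcF : 0 < cF) : 0 < cOf τ cF :=
  div_pos (by positivity) (muOf_pos hτ hcF)

lemma ThetaOf_eq (τ cF : ℝ) (k : ℕ) (x : ℝ) :
    ThetaOf τ cF k x
      = 1 - exp (-(cOf τ cF * (k : ℝ) ^ (-alphaOf τ) * x ^ (-alphaOf τ))) := by
  rw [ThetaOf, thetaOf, cOf]
  ring_nf

lemma BalphaOf_eq {τ cF : ℝ} (hτ : τ ∈ Ioo (2 : ℝ) 3) (hcF : 0 < cF) :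
    BalphaOf τ cF = cOf τ cF ^ (1 / alphaOf τ) * AalphaOf τ / alphaOf τ := by
  rw [BalphaOf, cOf, div_rpow (by positivity) (muOf_pos hτ hcF).le, ← rpow_natCast,
    ← rpow_mul hcF.le]
  push_cast
  ring_nf

lemma hOf_eq_integral_mul {τ cF x y : ℝ} (hτ : τ ∈ Ioo (2 : ℝ) 3) (hcF : 0 < cF) (hx : 0 < x)
    (hxy : x ≤ y) :
    hOf τ cF x y
      = (∫ t in Ioi (0 : ℝ), (1 - exp (-(cOf τ cF * x ^ (-alphaOf τ) * t ^ (-alphaOf τ))))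
          * t ^ (-alphaOf τ)) * (cOf τ cF * y ^ (-alphaOf τ)) := by
  obtain ⟨hα₁, -⟩ := alphaOf_mem_Ioo hτ
  have hc := cOf_pos hτ hcF
  rw [integral_one_sub_exp_neg_mul_rpow_mul_rpow (by linarith) (by positivity), hOf,
    BalphaOf_eq hτ hcF, AalphaOf, min_eq_left hxy, max_eq_right hxy,
    mul_rpow hc.le (by positivity), ← rpow_mul hx.le, rpow_sub_one hc.ne',
    show -alphaOf τ * (1 / alphaOf τ - 1) = -(1 - alphaOf τ) by field_simp]
  field_simp

lemma tendsto_hOf_natCast_atTop {τ cF x : ℝ} (hτ : τ ∈ Ioo (2 : ℝ) 3) (hcF : 0 < cF)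
    (hx : 0 < x) : Tendsto (fun j : ℕ => hOf τ cF x j) atTop (𝓝 0) := by
  have hb := tendsto_mul_natCast_rpow_neg_nhdsGT (α := alphaOf τ) (cOf_pos hτ hcF)
    (by linarith [(alphaOf_mem_Ioo hτ).1])
  simpa using ((tendsto_nhdsWithin_iff.mp hb).1.const_mul _).congr'
    ((tendsto_natCast_atTop_atTop.eventually_ge_atTop x).mono fun j hj =>
      (hOf_eq_integral_mul hτ hcF hx hj).symm)

lemma tendsto_integral_ThetaOf_mul_div_hOf {τ cF : ℝ} (hτ : τ ∈ Ioo (2 : ℝ) 3) (hcF : 0 < cF)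
    {i : ℕ} (hi : 1 ≤ i) :
    Tendsto (fun j : ℕ => (∫ x in Ioi (0 : ℝ), ThetaOf τ cF i x * ThetaOf τ cF j x) /
      hOf τ cF i j) atTop (𝓝 1) := by
  obtain ⟨hα₁, hα₂⟩ := alphaOf_mem_Ioo hτ
  have hi₀ : (0 : ℝ) < i := by exact_mod_cast hi
  have hc := cOf_pos hτ hcF
  have hb := tendsto_mul_natCast_rpow_neg_nhdsGT (α := alphaOf τ) hc (by linarith)
  have hI := integral_one_sub_exp_neg_mul_rpow_mul_rpow_pos hα₁ hα₂
    (mul_pos hc (rpow_pos_of_pos hi₀ (-alphaOf τ)))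
  refine (div_self hI.ne' ▸ ((tendsto_integral_one_sub_exp_neg_mul_rpow_div hα₁ hα₂
    (by positivity)).comp hb).div_const _).congr' ?_
  filter_upwards [hb.eventually self_mem_nhdsWithin, eventually_ge_atTop i] with j hbj hij
  simp only [Function.comp_apply, ThetaOf_eq,
    hOf_eq_integral_mul hτ hcF hi₀ (by exact_mod_cast hij : (i : ℝ) ≤ j)]
  ring

/-- With `p_∞(i,j) = 1 − e^{−λ_{ij}}`, the iterated limit
`lim_{i→∞} lim_{j→∞} p_∞(i,j)/(λ² h(i,j)) = 1`: for each fixed `i` the inner limit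
over `j` exists, and the resulting values converge to `1` as `i → ∞`. -/
theorem stmt5 (τ cF lam : ℝ) (hτ : τ ∈ Set.Ioo (2 : ℝ) 3) (hcF : 0 < cF) (hlam : 0 < lam) :
    ∃ L : ℕ → ℝ,
      (∀ i : ℕ, 1 ≤ i →
        Tendsto
          (fun j : ℕ =>
            (1 - Real.exp (-(lamIJ τ cF lam i j))) / (lam ^ 2 * hOf τ cF (i : ℝ) (j : ℝ)))
          atTop (nhds (L i)))
      ∧ Tendsto L atTop (nhds 1) := by
  refine ⟨fun _ => 1, fun i hi => ?_, tendsto_const_nhds⟩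
  have hi₀ : (0 : ℝ) < i := by exact_mod_cast hi
  refine Tendsto.one_sub_exp_neg_div
    (by simpa using (tendsto_hOf_natCast_atTop hτ hcF hi₀).const_mul (lam ^ 2)) ?_
  simpa only [lamIJ, mul_div_mul_left _ _ (pow_ne_zero 2 hlam.ne')] using
    tendsto_integral_ThetaOf_mul_div_hOf hτ hcF hi
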